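/- For n = k·m, the DFT factors as F_n = L^n_k (I_k ⊗ F_m) W^n_m L^n_m (I_m ⊗ F_k) L^n_k, a splitting rule in which both DFT factors appear in the form I ⊗ F. -/

import Mathlib

open Matrix Complex

/-- The primitive `n`-th root of unity `ω_n = exp(-2πi/n)`. -/
noncomputable def tw (n : ℕ) : ℂ := Complex.exp (-(2 * Real.pi * Complex.I) / n)

/-- The `n × n` DFT matrix `F_n = [ω_n^{kl}]`. -/
noncomputable def DFT (n : ℕ) : Matrix (Fin n) (Fin n) ℂ :=
  fun r c => tw n ^ (r.val * c.val)

/-- The stride permutation `L^n_k` (with `n = k*m`), sending the basis vector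
`e_{i,k} ⊗ e_{j,m}` (flat index `i*m+j`) to `e_{j,m} ⊗ e_{i,k}` (flat index `j*k+i`). -/
noncomputable def Lmat (n k m : ℕ) : Matrix (Fin n) (Fin n) ℂ :=
  fun r c => if r.val = (c.val % m) * k + c.val / m then 1 else 0

/-- The diagonal twiddle matrix `W^n_m` (with `n = k*m`), acting on
`e_{i,k} ⊗ e_{j,m}` (flat index `c = i*m+j`) by the scalar `ω_n^{ij}`. -/
noncomputable def Wmat (n m : ℕ) : Matrix (Fin n) (Fin n) ℂ :=
  fun r c => if r = c then tw n ^ ((c.val / m) * (c.val % m)) else 0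

/-- Entry of a `k × k` matrix at natural-number indices (0 outside range). -/
noncomputable def ment {k : ℕ} (A : Matrix (Fin k) (Fin k) ℂ) (i j : ℕ) : ℂ :=
  if h : i < k ∧ j < k then A ⟨i, h.1⟩ ⟨j, h.2⟩ else 0

/-- Kronecker product `A ⊗ B` of a `k×k` and an `m×m` matrix, written on flat
indices of size `n = k*m` (row-major: index `i*m+j ↔ e_{i,k} ⊗ e_{j,m}`). -/
noncomputable def kron (n k m : ℕ) (A : Matrix (Fin k) (Fin k) ℂ)
    (B : Matrix (Fin m) (Fin m) ℂ) : Matrix (Fin n) (Fin n) ℂ :=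
  fun r c => ment A (r.val / m) (c.val / m) * ment B (r.val % m) (c.val % m)

/-- Value of a digit list `[d_0, d_1, …]` in the mixed-radix system with radices
`[c_0, c_1, …]` (least-significant first): `d_0 + c_0*(d_1 + c_1*(…))`. -/
def mval : List ℕ → List ℕ → ℕ
  | c :: cs, d :: ds => d + c * mval cs ds
  | _, _ => 0

/-- Digits (least-significant first) of `x` in the mixed-radix system with
radices `[c_0, c_1, …]` (least-significant first). -/
def mdig : List ℕ → ℕ → List ℕ
  | [], _ => []
  | c :: cs, x => x % c :: mdig cs (x / c)

/-- The digit-reversal permutation `P_α` of a multi-index `α = (n_K, …, n_0)`,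
where `a = [n_0, …, n_K]` lists the radices of the system generated by `α`
least-significant first: `x` is decomposed in the system generated by
`α* = (n_0, …, n_K)` and re-read with reversed digits in the system of `α`. -/
def mrev (a : List ℕ) (x : ℕ) : ℕ := mval a ((mdig a.reverse x).reverse)

/-- The digit-reversal permutation matrix `S_α`, `S_α e_x = e_{P_α x}`;
`a = [n_0, …, n_K]` lists `α = (n_K, …, n_0)` least-significant first. -/
noncomputable def Smat (n : ℕ) (a : List ℕ) : Matrix (Fin n) (Fin n) ℂ :=
  fun r c => if r.val = mrev a c.val then 1 else 0

/-- The diagonal matrix `V_{k,m,n}` of size `N = k*m*n`, acting on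
`e_{i,k} ⊗ e_{j,m} ⊗ e_{ℓ,n}` (flat index `i*(m*n) + j*n + ℓ`) by
`ω_{kmn}^{i(ℓ m + j)}`. -/
noncomputable def Vmat (N k m n : ℕ) : Matrix (Fin N) (Fin N) ℂ :=
  fun r c => if r = c then
    tw (k * m * n) ^ ((c.val / (m * n)) * ((c.val % n) * m + (c.val / n) % m)) else 0

/-!
Reading indices of `Fin (k * m)` in the grid `Fin k × Fin m` (row-major), the stride permutation
matrices become the coordinate swap. Writing `r = k r₁ + r₀` and `c = m c₁ + c₀`, the identity
`ω_n^{rc} = ω_m^{r₁ c₀} ω_n^{r₀ c₀} ω_k^{r₀ c₁}` (as `ω_n^n = 1`, `ω_n^k = ω_m`, `ω_n^m = ω_k`) is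
exactly the entrywise form of the decimation-in-frequency rule
`F_n = L^n_k (I_k ⊗ F_m) W^n_m (F_k ⊗ I_m)`. Conjugating by the stride permutations swaps the two
Kronecker factors, `L^n_m (I_m ⊗ F_k) L^n_k = F_k ⊗ I_m`, which gives the stated form.
-/

theorem tw_pow_self {n : ℕ} (hn : n ≠ 0) : tw n ^ n = 1 := by
  rw [tw, ← Complex.exp_nat_mul, mul_div_cancel₀ _ (Nat.cast_ne_zero.2 hn), Complex.exp_neg,
    Complex.exp_two_pi_mul_I, inv_one]

theorem tw_mul_pow_left {k : ℕ} (m : ℕ) (hk : k ≠ 0) : tw (k * m) ^ k = tw m := by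
  rw [tw, tw, ← Complex.exp_nat_mul, Nat.cast_mul, ← div_div, div_right_comm, mul_comm,
    div_mul_cancel₀ _ (Nat.cast_ne_zero.2 hk)]

section

variable {n k m : ℕ}

theorem tw_pow_mul_eq (hn : n = k * m) (hk : k ≠ 0) (hm : m ≠ 0) (r c : ℕ) :
    tw n ^ (r * c) =
      tw m ^ (r / k * (c % m)) * tw n ^ (r % k * (c % m)) * tw k ^ (r % k * (c / m)) := by
  have hexp : r * c = k * (r / k * (c % m)) + r % k * (c % m) + m * (r % k * (c / m))
      + n * (r / k * (c / m)) := by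
    conv_lhs => rw [← Nat.div_add_mod r k, ← Nat.div_add_mod c m]
    rw [hn]; ring
  have htwm : tw m = tw n ^ k := by rw [hn, tw_mul_pow_left m hk]
  have htwk : tw k = tw n ^ m := by rw [hn, mul_comm, tw_mul_pow_left k hm]
  rw [htwm, htwk, ← pow_mul, ← pow_mul, hexp, pow_add, pow_mul _ n,
    tw_pow_self (hn ▸ mul_ne_zero hk hm), one_pow, mul_one, pow_add, pow_add]

theorem Fin.val_div_lt_of_eq_mul (hn : n = k * m) (c : Fin n) : (c : ℕ) / m < k :=
  Nat.div_lt_of_lt_mul (by rw [mul_comm, ← hn]; exact c.isLt)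

def stride (k m : ℕ) (hn : n = k * m) : Fin n ≃ Fin n :=
  (finCongr hn).trans <| finProdFinEquiv.symm.trans <| (Equiv.prodComm _ _).trans <|
    finProdFinEquiv.trans (finCongr (hn.trans (mul_comm k m)).symm)

theorem stride_apply_val (hn : n = k * m) (c : Fin n) :
    (stride k m hn c : ℕ) = c % m * k + c / m := by
  rw [Nat.mul_comm, Nat.add_comm]
  rfl

theorem stride_apply_div (hn : n = k * m) (c : Fin n) : (stride k m hn c : ℕ) / k = c % m := by
  have hc := Fin.val_div_lt_of_eq_mul hn c
  rw [stride_apply_val, Nat.add_comm, Nat.add_mul_div_right _ _ (Nat.zero_lt_of_lt hc),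
    Nat.div_eq_of_lt hc, zero_add]

theorem stride_apply_mod (hn : n = k * m) (c : Fin n) : (stride k m hn c : ℕ) % k = c / m := by
  rw [stride_apply_val, Nat.add_comm, Nat.add_mul_mod_self_right,
    Nat.mod_eq_of_lt (Fin.val_div_lt_of_eq_mul hn c)]

theorem stride_symm (hn : n = k * m) :
    (stride k m hn).symm = stride m k (hn.trans (mul_comm k m)) := by
  ext c
  simp [stride, finProdFinEquiv, Fin.divNat, Fin.modNat]

theorem Lmat_eq_toMatrix (hn : n = k * m) :
    Lmat n k m = (stride k m hn).symm.toPEquiv.toMatrix := by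
  ext r c
  simp only [Lmat, PEquiv.toMatrix_apply, Equiv.toPEquiv_apply, Option.mem_some_iff,
    Equiv.eq_symm_apply, Fin.ext_iff, stride_apply_val, eq_comm]

theorem Lmat_mul (hn : n = k * m) (M : Matrix (Fin n) (Fin n) ℂ) :
    Lmat n k m * M = M.submatrix (stride k m hn).symm id := by
  rw [Lmat_eq_toMatrix hn, PEquiv.toMatrix_toPEquiv_mul]

theorem mul_Lmat (hn : n = k * m) (M : Matrix (Fin n) (Fin n) ℂ) :
    M * Lmat n k m = M.submatrix id (stride k m hn) := by
  rw [Lmat_eq_toMatrix hn, PEquiv.mul_toMatrix_toPEquiv, Equiv.symm_symm]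

theorem Lmat_mul_kron_mul_Lmat (hn : n = k * m) (A : Matrix (Fin m) (Fin m) ℂ)
    (B : Matrix (Fin k) (Fin k) ℂ) :
    Lmat n m k * kron n m k A B * Lmat n k m = kron n k m B A := by
  have hn' : n = m * k := hn.trans (mul_comm k m)
  ext r c
  rw [Lmat_mul hn', mul_Lmat hn, ← stride_symm hn, Equiv.symm_symm]
  simp only [submatrix_apply, id, kron, stride_apply_div, stride_apply_mod, mul_comm]

theorem ment_one_of_ne {i j : ℕ} (h : i ≠ j) : ment (1 : Matrix (Fin k) (Fin k) ℂ) i j = 0 := by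
  unfold ment
  split_ifs <;> simp [Fin.ext_iff, h]

theorem ment_one_self {i : ℕ} (h : i < k) : ment (1 : Matrix (Fin k) (Fin k) ℂ) i i = 1 := by
  simp [ment, h]

theorem ment_DFT {i j : ℕ} (hi : i < n) (hj : j < n) : ment (DFT n) i j = tw n ^ (i * j) := by
  simp [ment, DFT, hi, hj]

theorem Wmat_eq_diagonal : Wmat n m = diagonal fun c : Fin n => tw n ^ ((c : ℕ) / m * (c % m)) := by
  ext r c
  by_cases h : r = c <;> simp [Wmat, h]

theorem kron_one_mul_Wmat_mul_kron_one_apply (hn : n = k * m) (hm : 0 < m)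
    (A : Matrix (Fin k) (Fin k) ℂ) (B : Matrix (Fin m) (Fin m) ℂ) (r c : Fin n) :
    (kron n k m 1 B * Wmat n m * kron n k m A 1) r c =
      ment B (r % m) (c % m) * tw n ^ (r / m * (c % m)) * ment A (r / m) (c / m) := by
  have hr := Fin.val_div_lt_of_eq_mul hn r
  have hc : (c : ℕ) % m < m := Nat.mod_lt _ hm
  let t : Fin n := ⟨m * (r / m) + c % m, (Nat.mul_add_lt_mul_of_lt_of_lt hr hc).trans_eq hn.symm⟩
  have ht_div : (t : ℕ) / m = r / m := by
    rw [Nat.mul_add_div hm, Nat.div_eq_of_lt hc, add_zero]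
  have ht_mod : (t : ℕ) % m = c % m := by
    rw [Nat.mul_add_mod, Nat.mod_eq_of_lt hc]
  rw [Wmat_eq_diagonal, mul_apply, Finset.sum_eq_single t]
  · simp only [mul_diagonal, kron, ht_div, ht_mod, ment_one_self hr, ment_one_self hc]
    ring
  · intro j _ hj
    have hsplit : (j : ℕ) / m ≠ r / m ∨ (j : ℕ) % m ≠ c % m := by
      by_contra! h
      exact hj (Fin.ext (by rw [← Nat.div_add_mod j m, h.1, h.2]))
    rcases hsplit with h | h
    · simp [kron, ment_one_of_ne h.symm]
    · simp [kron, ment_one_of_ne h]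
  · exact fun ht => absurd (Finset.mem_univ t) ht

theorem DFT_eq_Lmat_mul_kron_one_mul_Wmat_mul_kron_one (hn : n = k * m) (hk : 0 < k)
    (hm : 0 < m) :
    DFT n = Lmat n k m * kron n k m 1 (DFT m) * Wmat n m * kron n k m (DFT k) 1 := by
  have hn' : n = m * k := hn.trans (mul_comm k m)
  ext r c
  rw [Matrix.mul_assoc, Matrix.mul_assoc, Lmat_mul hn, submatrix_apply, id, ← Matrix.mul_assoc,
    kron_one_mul_Wmat_mul_kron_one_apply hn hm, stride_symm, stride_apply_div hn',
    stride_apply_mod hn', ment_DFT (Fin.val_div_lt_of_eq_mul hn' r) (Nat.mod_lt _ hm),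
    ment_DFT (Nat.mod_lt _ hk) (Fin.val_div_lt_of_eq_mul hn c)]
  exact tw_pow_mul_eq hn hk.ne' hm.ne' r c

end

/-- `F_n = L^n_k (I_k ⊗ F_m) W^n_m L^n_m (I_m ⊗ F_k) L^n_k` for `n = k·m`. -/
theorem dft_split_both_tensor (k m n : ℕ) (hk : 0 < k) (hm : 0 < m) (hn : n = k * m) :
    DFT n = Lmat n k m * kron n k m 1 (DFT m) * Wmat n m * Lmat n m k *
      kron n m k 1 (DFT k) * Lmat n k m := by
  rw [DFT_eq_Lmat_mul_kron_one_mul_Wmat_mul_kron_one hn hk hm,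
    ← Lmat_mul_kron_mul_Lmat hn 1 (DFT k)]
  simp only [Matrix.mul_assoc]
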